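/- arXiv:2311.16721 — 5 statements merged into one kernel-verified Lean document; each statement's English description precedes it below -/
import Mathlib

section
/- Let N ≥ 3. For the complete graph on N nodes (adjacency A j m holds iff j ≠ m), let P denote the number of SIR paths from the configuration in which node 0 is infected and all other nodes are susceptible to the all-recovered configuration. Then (N−1)!·N! < (2N−1)·((N−1)!)² ≤ P and 2^(N−1)·P < (2N−1)!. -/
/-- An SIR transition: either a neighbour infects a susceptible node,
or an infected node recovers. -/
def SIRTrans {N : ℕ} (A : Fin N → Fin N → Prop) (x y : Fin N → Fin 3) : Prop :=
  (∃ m : Fin N, x m = 0 ∧ y m = 1 ∧ (∃ j : Fin N, A j m ∧ x j = 1) ∧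
    ∀ i : Fin N, i ≠ m → y i = x i) ∨
  (∃ m : Fin N, x m = 1 ∧ y m = 2 ∧ ∀ i : Fin N, i ≠ m → y i = x i)

/-- An SIR path from `x` to `y`: a nonempty finite sequence of configurations
starting at `x`, ending at `y`, with consecutive pairs being SIR transitions. -/
def IsSIRPath {N : ℕ} (A : Fin N → Fin N → Prop) (x y : Fin N → Fin 3)
    (L : List (Fin N → Fin 3)) : Prop :=
  L ≠ [] ∧ L.head? = some x ∧ L.getLast? = some y ∧ L.Chain' (SIRTrans A)

/-- The number of SIR paths from `x` to `y`. -/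
noncomputable def numSIRPaths {N : ℕ} (A : Fin N → Fin N → Prop)
    (x y : Fin N → Fin 3) : ℕ :=
  Set.ncard {L : List (Fin N → Fin 3) | IsSIRPath A x y L}

/-!
A path is recorded by its word of events `(node, new state)`. Along a path from patient zero
to total recovery, each of the `2N - 1` events "`j` is infected" (`j ≠ 0`) and "`j` recovers"
happens exactly once, so the paths are particular orderings of these events.

Upper bound: exchanging the infection and the recovery event of every node of a set
`T ⊆ {1, …, N - 1}` is injective on pairs (path, `T`), because `T` is recovered as the set of
nodes that recover before being infected; and it never produces the ordering that starts with
the recovery of patient zero. Hence `2 ^ (N - 1) * P ≤ (2N - 1)! - 1`.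

Lower bound: on the complete graph, infect nodes `1, …, N - 1` in any order, let one of the
`c + 2` infected nodes recover right after the `(c + 1)`-st infection, and let the others recover
in any order at the end. These paths are distinct, and there are
`(N - 1)! ^ 2 * ∑_{c < N - 1} (c + 2) ≥ (2N - 1) * (N - 1)! ^ 2` of them.
-/

lemma List.Nodup.eq_of_pair_sublist {α : Type*} {a b : α} {l : List α} (hl : l.Nodup)
    (hab : [a, b].Sublist l) (hba : [b, a].Sublist l) : a = b := by
  induction l with
  | nil => simp at hab
  | cons c l ih =>
    obtain ⟨hc, hl⟩ := List.nodup_cons.mp hl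
    cases hab with
    | cons _ hab =>
      cases hba with
      | cons _ hba => exact ih hl hab hba
      | cons_cons _ hba => exact absurd (hab.subset (by simp)) hc
    | cons_cons _ hab =>
      cases hba with
      | cons _ hba => exact absurd (hba.subset (by simp)) hc
      | cons_cons _ _ => rfl

namespace SIR

abbrev Config (n : ℕ) := Fin n → Fin 3

abbrev Event (n : ℕ) := Fin n × Fin 3

section Words

variable {n : ℕ}

def step (x : Config n) (e : Event n) : Config n := Function.update x e.1 e.2

def applyWord (x : Config n) (w : List (Event n)) : Config n := w.foldl step x

def run (x : Config n) : List (Event n) → List (Config n)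
  | [] => [x]
  | e :: w => x :: run (step x e) w

def IsStep (A : Fin n → Fin n → Prop) (x : Config n) (e : Event n) : Prop :=
  (e.2 = 1 ∧ x e.1 = 0 ∧ ∃ j, A j e.1 ∧ x j = 1) ∨ (e.2 = 2 ∧ x e.1 = 1)

def IsValid (A : Fin n → Fin n → Prop) : Config n → List (Event n) → Prop
  | _, [] => True
  | x, e :: w => IsStep A x e ∧ IsValid A (step x e) w

variable {A : Fin n → Fin n → Prop} {x : Config n} {e : Event n} {w w' : List (Event n)}

@[simp] lemma isValid_nil : IsValid A x [] := trivial

@[simp] lemma isValid_cons : IsValid A x (e :: w) ↔ IsStep A x e ∧ IsValid A (step x e) w :=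
  Iff.rfl

@[simp] lemma applyWord_nil : applyWord x [] = x := rfl

@[simp] lemma applyWord_cons : applyWord x (e :: w) = applyWord (step x e) w := rfl

lemma applyWord_append : applyWord x (w ++ w') = applyWord (applyWord x w) w' :=
  List.foldl_append ..

lemma isValid_append :
    IsValid A x (w ++ w') ↔ IsValid A x w ∧ IsValid A (applyWord x w) w' := by
  induction w generalizing x with
  | nil => simp
  | cons e w ih => simp [ih, and_assoc]

@[simp] lemma step_self : step x e e.1 = e.2 := Function.update_self ..

lemma step_of_ne {i : Fin n} (h : i ≠ e.1) : step x e i = x i := Function.update_of_ne h ..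

lemma applyWord_map_pair (x : Config n) (l : List (Fin n)) (v : Fin 3) (i : Fin n) :
    applyWord x (l.map (·, v)) i = if i ∈ l then v else x i := by
  induction l generalizing x with
  | nil => simp
  | cons m l ih =>
    rw [List.map_cons, applyWord_cons, ih]
    by_cases hi : i = m
    · subst hi; simp [step]
    · simp [hi, step_of_ne (e := (m, v)) hi]

lemma IsStep.lt (h : IsStep A x e) : x e.1 < e.2 := by
  rcases h with ⟨h2, h1, -⟩ | ⟨h2, h1⟩ <;> rw [h2, h1] <;> decide

lemma IsStep.le_step (h : IsStep A x e) (i : Fin n) : x i ≤ step x e i := by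
  rcases eq_or_ne i e.1 with rfl | hi
  · exact step_self (x := x) ▸ h.lt.le
  · exact (step_of_ne hi).ge

/-- States only increase along a valid word. -/
lemma IsValid.lt_of_mem (h : IsValid A x w) (he : e ∈ w) : x e.1 < e.2 := by
  induction w generalizing x with
  | nil => simp at he
  | cons f w ih =>
    rcases List.mem_cons.mp he with rfl | he
    · exact h.1.lt
    · exact (h.1.le_step e.1).trans_lt (ih h.2 he)

lemma IsValid.nodup (h : IsValid A x w) : w.Nodup := by
  induction w generalizing x with
  | nil => simp
  | cons e w ih =>
    refine List.nodup_cons.mpr ⟨fun he => ?_, ih h.2⟩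
    simpa using h.2.lt_of_mem he

lemma mem_of_applyWord_ne {m : Fin n} (h : applyWord x w m ≠ x m) :
    (m, applyWord x w m) ∈ w := by
  induction w generalizing x with
  | nil => simp at h
  | cons e w ih =>
    rw [applyWord_cons] at h ⊢
    by_cases h' : applyWord (step x e) w m = step x e m
    · rcases eq_or_ne m e.1 with rfl | hm
      · simp [h']
      · exact absurd (h'.trans (step_of_ne hm)) h
    · exact List.mem_cons_of_mem _ (ih h')

lemma IsValid.sublist_of_recovery_mem {m : Fin n} (h : IsValid A x w) (hx : x m = 0)
    (hmem : (m, 2) ∈ w) : [(m, 1), (m, 2)].Sublist w := by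
  obtain ⟨w₁, w₂, rfl⟩ := List.append_of_mem hmem
  obtain ⟨h₁, h₂⟩ := isValid_append.mp h
  have hinf : applyWord x w₁ m = 1 := by
    rcases h₂.1 with ⟨h, -⟩ | ⟨-, h⟩
    · exact absurd h (show (2 : Fin 3) ≠ 1 by decide)
    · exact h
  have hmem₁ : (m, 1) ∈ w₁ := hinf ▸ mem_of_applyWord_ne (by rw [hinf, hx]; decide)
  exact (List.singleton_sublist.mpr hmem₁).append (List.Sublist.cons_cons _ (List.nil_sublist _))

lemma sirTrans_step_iff : SIRTrans A x (step x e) ↔ IsStep A x e := by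
  constructor
  · rintro (⟨m, h0, h1, hj, hrest⟩ | ⟨m, h1, h2, hrest⟩)
    all_goals
      obtain rfl : m = e.1 := by
        by_contra hm
        rw [step_of_ne hm] at *
        simp_all
      rw [step_self] at *
    · exact Or.inl ⟨h1, h0, hj⟩
    · exact Or.inr ⟨h2, h1⟩
  · rintro (⟨h1, h0, hj⟩ | ⟨h2, h1⟩)
    · exact Or.inl ⟨e.1, h0, by rw [step_self, h1], hj, fun i hi => step_of_ne hi⟩
    · exact Or.inr ⟨e.1, h1, by rw [step_self, h2], fun i hi => step_of_ne hi⟩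

lemma exists_eq_step_of_sirTrans {y : Config n} (h : SIRTrans A x y) : ∃ e, y = step x e := by
  obtain ⟨m, -, -, -, hrest⟩ | ⟨m, -, -, hrest⟩ := h
  all_goals
    refine ⟨(m, y m), funext fun i => ?_⟩
    rcases eq_or_ne i m with rfl | hi
    · simp [step]
    · rw [step_of_ne hi, hrest i hi]

@[simp] lemma run_ne_nil : run x w ≠ [] := by cases w <;> simp [run]

@[simp] lemma head?_run : (run x w).head? = some x := by cases w <;> simp [run]

@[simp] lemma getLast?_run : (run x w).getLast? = some (applyWord x w) := by
  induction w generalizing x with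
  | nil => simp [run]
  | cons e w ih =>
    obtain ⟨z, zs, hz⟩ := List.exists_cons_of_ne_nil (run_ne_nil (x := step x e) (w := w))
    rw [run, applyWord_cons, ← ih, hz, List.getLast?_cons_cons]

lemma isChain_run_iff : (run x w).IsChain (SIRTrans A) ↔ IsValid A x w := by
  induction w generalizing x with
  | nil => simp [run]
  | cons e w ih => simp [run, List.isChain_cons, ih, sirTrans_step_iff]

lemma isSIRPath_run_iff {y : Config n} :
    IsSIRPath A x y (run x w) ↔ IsValid A x w ∧ applyWord x w = y := by
  show _ ∧ _ ∧ _ ∧ (run x w).IsChain (SIRTrans A) ↔ _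
  simp [isChain_run_iff, and_comm]

lemma exists_run_of_isSIRPath {y : Config n} {L : List (Config n)} (h : IsSIRPath A x y L) :
    ∃ w, run x w = L := by
  obtain ⟨-, hhead, -, hchain⟩ := h
  induction L generalizing x with
  | nil => simp at hhead
  | cons z L ih =>
    obtain rfl : z = x := by simpa using hhead
    cases L with
    | nil => exact ⟨[], rfl⟩
    | cons z' L =>
      obtain ⟨htrans, hchain⟩ := List.isChain_cons_cons.mp hchain
      obtain ⟨e, rfl⟩ := exists_eq_step_of_sirTrans htrans
      obtain ⟨w, hw⟩ := ih rfl hchain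
      exact ⟨e :: w, by rw [run, hw]⟩

lemma eq_of_run_eq (hw : IsValid A x w) (hw' : IsValid A x w') (h : run x w = run x w') : w = w' := by
  induction w generalizing x w' with
  | nil => cases w' <;> simp_all [run]
  | cons e w ih =>
    cases w' with
    | nil => simp [run] at h
    | cons e' w' =>
      obtain ⟨hstep, htail⟩ :
          step x e = step x e' ∧ run (step x e) w = run (step x e') w' := by
        simp only [run, List.cons.injEq, true_and] at h
        exact ⟨by simpa using congrArg List.head? h, h⟩
      -- `e` changes the state of its node, so `step x e` determines `e`
      have he₁ : e.1 = e'.1 := by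
        by_contra hne
        have := congrFun hstep e.1
        rw [step_self, step_of_ne hne] at this
        exact (this ▸ hw.1.lt).false
      have he₂ : e.2 = e'.2 := by
        have := congrFun hstep e.1
        rwa [step_self, he₁, step_self] at this
      obtain rfl : e = e' := Prod.ext he₁ he₂
      rw [ih hw.2 hw'.2 htail]

theorem numSIRPaths_eq_ncard (x y : Config n) :
    numSIRPaths A x y = {w | IsValid A x w ∧ applyWord x w = y}.ncard := by
  have hpaths : {L | IsSIRPath A x y L} = run x '' {w | IsValid A x w ∧ applyWord x w = y} := by
    ext L
    constructor
    · intro hL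
      obtain ⟨w, rfl⟩ := exists_run_of_isSIRPath hL
      exact ⟨w, isSIRPath_run_iff.mp hL, rfl⟩
    · rintro ⟨w, hw, rfl⟩
      exact isSIRPath_run_iff.mpr hw
  rw [numSIRPaths, hpaths, Set.InjOn.ncard_image]
  exact fun w hw w' hw' h => eq_of_run_eq hw.1 hw'.1 h

lemma isValid_map_infect (hA : ∀ j m, j ≠ m → A j m) {l : List (Fin n)} (hl : l.Nodup)
    (hsus : ∀ m ∈ l, x m = 0) (hinf : ∃ j, x j = 1) : IsValid A x (l.map (·, 1)) := by
  induction l generalizing x with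
  | nil => trivial
  | cons m l ih =>
    obtain ⟨hml, hl⟩ := List.nodup_cons.mp hl
    obtain ⟨j, hj⟩ := hinf
    have hjm : j ≠ m := fun h => by simp [h, hsus m (by simp)] at hj
    refine ⟨Or.inl ⟨rfl, hsus m (by simp), j, hA j m hjm, hj⟩,
      ih hl (fun i hi => ?_) ⟨m, step_self⟩⟩
    rw [step_of_ne (ne_of_mem_of_not_mem hi hml)]
    exact hsus i (by simp [hi])

lemma isValid_map_recover {l : List (Fin n)} (hl : l.Nodup) (hinf : ∀ m ∈ l, x m = 1) :
    IsValid A x (l.map (·, 2)) := by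
  induction l generalizing x with
  | nil => trivial
  | cons m l ih =>
    obtain ⟨hml, hl⟩ := List.nodup_cons.mp hl
    refine ⟨Or.inr ⟨rfl, hinf m (by simp)⟩, ih hl fun i hi => ?_⟩
    rw [step_of_ne (ne_of_mem_of_not_mem hi hml)]
    exact hinf i (by simp [hi])

def splitWord (I₁ : List (Fin n)) (p : Fin n) (I₂ R : List (Fin n)) : List (Event n) :=
  I₁.map (·, 1) ++ (p, 2) :: (I₂.map (·, 1) ++ R.map (·, 2))

lemma splitWord_inj {I₁ I₂ R I₁' I₂' R' : List (Fin n)} {p p' : Fin n}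
    (h : splitWord I₁ p I₂ R = splitWord I₁' p' I₂' R') :
    I₁ = I₁' ∧ p = p' ∧ I₂ = I₂' ∧ R = R' := by
  have hprefix : ∀ I₁ p (rest : List (Event n)),
      ((I₁.map (·, 1) ++ (p, 2) :: rest).takeWhile (·.2 = 1)).map Prod.fst = I₁ := by
    intro I₁ p rest
    rw [List.takeWhile_append_of_pos (by simp)]
    simp [Function.comp_def]
  obtain rfl : I₁ = I₁' := by
    rw [← hprefix I₁ p, ← hprefix I₁' p']
    exact congrArg (fun w => (w.takeWhile (·.2 = 1)).map Prod.fst) h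
  simp only [splitWord, List.append_cancel_left_eq, List.cons.injEq, Prod.mk.injEq, and_true] at h
  obtain ⟨rfl, h⟩ := h
  have hnodes : ∀ (u v : Fin 3) (l : List (Fin n)),
      ((l.map (·, v)).filter (·.2 = u)).map Prod.fst = if v = u then l else [] := by
    intro u v l
    split_ifs with hv <;> simp [List.filter_map, Function.comp_def, hv]
  have hI₂ := congrArg (fun w => (w.filter (·.2 = 1)).map Prod.fst) h
  have hR := congrArg (fun w => (w.filter (·.2 = 2)).map Prod.fst) h
  simp only [List.filter_append, List.map_append, hnodes] at hI₂ hR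
  simp_all

def flipAt (T : Finset (Fin n)) (e : Event n) : Event n :=
  if e.1 ∈ T then (e.1, Equiv.swap 1 2 e.2) else e

lemma flipAt_involutive (T : Finset (Fin n)) : Function.Involutive (flipAt T) := by
  intro e
  by_cases h : e.1 ∈ T <;> simp [flipAt, h]

lemma flipAt_of_mem {T : Finset (Fin n)} {m : Fin n} (hm : m ∈ T) (v : Fin 3) :
    flipAt T (m, v) = (m, Equiv.swap 1 2 v) := if_pos hm

lemma flipAt_of_not_mem {T : Finset (Fin n)} {m : Fin n} (hm : m ∉ T) (v : Fin 3) :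
    flipAt T (m, v) = (m, v) := if_neg hm

end Words

variable {M : ℕ}

def patientZero (M : ℕ) : Config (M + 1) := fun k => if (k : ℕ) = 0 then 1 else 0

@[simp] lemma patientZero_zero : patientZero M 0 = 1 := rfl

lemma patientZero_of_ne_zero {k : Fin (M + 1)} (hk : k ≠ 0) : patientZero M k = 0 :=
  if_neg (Fin.val_ne_zero_iff.mpr hk)

def IsEpidemic (A : Fin (M + 1) → Fin (M + 1) → Prop) (w : List (Event (M + 1))) : Prop :=
  IsValid A (patientZero M) w ∧ applyWord (patientZero M) w = fun _ => 2

/-- Every event of an epidemic, listed in an order that is not itself an epidemic. -/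
def events (M : ℕ) : List (Event (M + 1)) :=
  (0, 2) :: ((List.ofFn Fin.succ).map (·, 1) ++ (List.ofFn Fin.succ).map (·, 2))

lemma mem_events {e : Event (M + 1)} : e ∈ events M ↔ e.2 = 2 ∨ (e.2 = 1 ∧ e.1 ≠ 0) := by
  obtain ⟨m, v⟩ := e
  cases m using Fin.cases <;> fin_cases v <;> simp [events, Fin.succ_ne_zero]

lemma nodup_events : (events M).Nodup := by
  simp [events, List.nodup_append, List.nodup_ofFn, Fin.succ_ne_zero,
    (Prod.mk_left_injective _).comp (Fin.succ_injective _)]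

lemma length_events : (events M).length = 2 * M + 1 := by
  simp [events]; ring

lemma sublist_events {m : Fin (M + 1)} (hm : m ≠ 0) : [(m, 1), (m, 2)].Sublist (events M) := by
  obtain ⟨i, rfl⟩ := Fin.exists_succ_eq.mpr hm
  refine .cons _ ((List.singleton_sublist.mpr ?_).append (List.singleton_sublist.mpr ?_)) <;>
    simp

open Classical in
noncomputable def epidemics (A : Fin (M + 1) → Fin (M + 1) → Prop) :
    Finset (List (Event (M + 1))) :=
  (events M).permutations.toFinset.filter (IsEpidemic A)

variable {A : Fin (M + 1) → Fin (M + 1) → Prop} {w : List (Event (M + 1))}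

lemma not_isEpidemic_events (hM : M ≠ 0) : ¬ IsEpidemic A (events M) := by
  obtain ⟨M, rfl⟩ := Nat.exists_eq_succ_of_ne_zero hM
  rintro ⟨hvalid, -⟩
  simp only [events, List.ofFn_succ, List.map_cons, List.cons_append, isValid_cons] at hvalid
  -- once patient zero has recovered, nobody is infected and nobody can be infected
  obtain ⟨-, ⟨-, -, j, -, hj⟩ | ⟨h, -⟩, -⟩ := hvalid
  · rcases eq_or_ne j 0 with rfl | hj0
    · simp [step] at hj
    · rw [step_of_ne hj0, patientZero_of_ne_zero hj0] at hj
      exact absurd hj (by decide)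
  · exact absurd h (show (1 : Fin 3) ≠ 2 by decide)

lemma IsEpidemic.recovery_mem (h : IsEpidemic A w) (m : Fin (M + 1)) : (m, 2) ∈ w := by
  have hfinal : applyWord (patientZero M) w m = 2 := by rw [h.2]
  have hne : applyWord (patientZero M) w m ≠ patientZero M m := by
    rcases eq_or_ne m 0 with rfl | hm
    · simp [hfinal]
    · rw [hfinal, patientZero_of_ne_zero hm]; decide
  simpa [hfinal] using mem_of_applyWord_ne hne

lemma IsEpidemic.sublist (h : IsEpidemic A w) {m : Fin (M + 1)} (hm : m ≠ 0) :
    [(m, 1), (m, 2)].Sublist w :=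
  h.1.sublist_of_recovery_mem (patientZero_of_ne_zero hm) (h.recovery_mem m)

lemma IsEpidemic.perm_events (h : IsEpidemic A w) : w.Perm (events M) := by
  refine (List.perm_ext_iff_of_nodup h.1.nodup nodup_events).mpr fun ⟨m, v⟩ => ?_
  rw [mem_events]
  constructor
  · intro he
    have hlt := h.1.lt_of_mem he
    rcases eq_or_ne m 0 with rfl | hm
    · fin_cases v <;> simp_all
    · rw [patientZero_of_ne_zero hm] at hlt
      fin_cases v <;> simp_all
  · rintro (rfl | ⟨rfl, hm⟩)
    · exact h.recovery_mem m
    · exact (h.sublist hm).subset (by simp)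

lemma mem_epidemics : w ∈ epidemics A ↔ IsEpidemic A w := by
  simpa [epidemics] using fun h => h.perm_events

lemma numSIRPaths_patientZero_eq_card :
    numSIRPaths A (patientZero M) (fun _ => 2) = (epidemics A).card := by
  rw [numSIRPaths_eq_ncard, ← Set.ncard_coe_finset]
  congr 1
  ext w
  exact mem_epidemics.symm

lemma flipAt_mem_events_iff {T : Finset (Fin (M + 1))} (hT : 0 ∉ T) {e : Event (M + 1)} :
    flipAt T e ∈ events M ↔ e ∈ events M := by
  obtain ⟨m, v⟩ := e
  by_cases hm : m ∈ T
  · have hm0 : m ≠ 0 := ne_of_mem_of_not_mem hm hT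
    rw [flipAt_of_mem hm, mem_events, mem_events]
    fin_cases v <;> simp [Equiv.swap_apply_of_ne_of_ne, hm0]
  · rw [flipAt_of_not_mem hm]

lemma perm_events_map_flipAt (hw : w.Perm (events M))
    {T : Finset (Fin (M + 1))} (hT : 0 ∉ T) : (w.map (flipAt T)).Perm (events M) := by
  have hnodup := (hw.nodup_iff.mpr nodup_events).map (flipAt_involutive T).injective
  refine (List.perm_ext_iff_of_nodup hnodup nodup_events).mpr fun e => ?_
  conv_lhs => rw [← flipAt_involutive T e]
  rw [List.mem_map_of_injective (flipAt_involutive T).injective, hw.mem_iff,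
    flipAt_mem_events_iff hT]

lemma IsEpidemic.mem_iff_sublist_map_flipAt (h : IsEpidemic A w) {m : Fin (M + 1)} (hm : m ≠ 0)
    (T : Finset (Fin (M + 1))) : m ∈ T ↔ [(m, 2), (m, 1)].Sublist (w.map (flipAt T)) := by
  have hpair := (h.sublist hm).map (flipAt T)
  constructor
  · intro hmT
    simpa [flipAt_of_mem hmT] using hpair
  · intro hflip
    by_contra hmT
    rw [List.map_cons, List.map_cons, List.map_nil, flipAt_of_not_mem hmT,
      flipAt_of_not_mem hmT] at hpair
    have hnodup := h.1.nodup.map (flipAt_involutive T).injective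
    simpa using hnodup.eq_of_pair_sublist hpair hflip

lemma map_flipAt_ne_events (h : IsEpidemic A w) (hM : M ≠ 0) {T : Finset (Fin (M + 1))}
    (hT : 0 ∉ T) : w.map (flipAt T) ≠ events M := by
  intro hw
  have hT : T = ∅ := by
    refine Finset.eq_empty_of_forall_notMem fun m hm => ?_
    have hm0 : m ≠ 0 := ne_of_mem_of_not_mem hm hT
    have hrev := (h.mem_iff_sublist_map_flipAt hm0 T).mp hm
    rw [hw] at hrev
    simpa using nodup_events.eq_of_pair_sublist (sublist_events hm0) hrev
  subst hT
  have hflip : flipAt (∅ : Finset (Fin (M + 1))) = id := funext fun e => if_neg (by simp)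
  rw [hflip, List.map_id] at hw
  exact not_isEpidemic_events hM (hw ▸ h)

theorem two_pow_mul_card_epidemics_lt (hM : M ≠ 0) :
    2 ^ M * (epidemics A).card < (2 * M + 1).factorial := by
  set flips := (Finset.univ.erase (0 : Fin (M + 1))).powerset
  have hflips : ∀ T ∈ flips, 0 ∉ T := fun T hT h0 => by
    simpa using Finset.mem_powerset.mp hT h0
  have hcard : (epidemics A ×ˢ flips).card = 2 ^ M * (epidemics A).card := by
    rw [Finset.card_product, mul_comm]
    simp [flips, Finset.card_powerset]
  have hinj : (epidemics A ×ˢ flips).card ≤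
      ((events M).permutations.toFinset.erase (events M)).card := by
    refine Finset.card_le_card_of_injOn (fun p => p.1.map (flipAt p.2)) ?_ ?_
    · rintro ⟨w, T⟩ hp
      simp only [Finset.coe_product, Set.mem_prod, Finset.mem_coe, mem_epidemics] at hp
      simpa [map_flipAt_ne_events hp.1 hM (hflips T hp.2)]
        using perm_events_map_flipAt hp.1.perm_events (hflips T hp.2)
    · rintro ⟨w, T⟩ hp ⟨w', T'⟩ hp' heq
      simp only [Finset.coe_product, Set.mem_prod, Finset.mem_coe, mem_epidemics] at hp hp' heq
      obtain rfl : T = T' := by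
        ext m
        rcases eq_or_ne m 0 with rfl | hm
        · simp [hflips T hp.2, hflips T' hp'.2]
        · rw [hp.1.mem_iff_sublist_map_flipAt hm, hp'.1.mem_iff_sublist_map_flipAt hm, heq]
      rw [List.map_injective_iff.mpr (flipAt_involutive T).injective heq]
  calc 2 ^ M * (epidemics A).card
      ≤ ((events M).permutations.toFinset.erase (events M)).card := hcard ▸ hinj
    _ < (events M).permutations.toFinset.card :=
        Finset.card_erase_lt_of_mem (by simp)
    _ = (2 * M + 1).factorial := by
        rw [List.toFinset_card_of_nodup (List.nodup_permutations _ nodup_events),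
          List.length_permutations, length_events]

lemma isValid_infect_recover_infect (hA : ∀ j m, j ≠ m → A j m)
    {I₁ I₂ : List (Fin (M + 1))} {p : Fin (M + 1)} (hI : (I₁ ++ I₂).Nodup)
    (hmemI : ∀ m, m ∈ I₁ ++ I₂ ↔ m ≠ 0) (hI₁ : I₁ ≠ []) (hp : p ∈ 0 :: I₁) :
    IsValid A (patientZero M) (I₁.map (·, 1) ++ (p, 2) :: I₂.map (·, 1)) ∧
      applyWord (patientZero M) (I₁.map (·, 1) ++ (p, 2) :: I₂.map (·, 1)) =
        fun i => if i = p then 2 else 1 := by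
  have hdisj := List.disjoint_of_nodup_append hI
  have h0I₁ : 0 ∉ I₁ := fun h => (hmemI 0).mp (List.mem_append_left _ h) rfl
  have h0I₂ : 0 ∉ I₂ := fun h => (hmemI 0).mp (List.mem_append_right _ h) rfl
  have hpI₂ : p ∉ I₂ := by
    rcases List.mem_cons.mp hp with rfl | hp
    exacts [h0I₂, fun h => hdisj hp h]
  set x₁ := applyWord (patientZero M) (I₁.map (·, 1))
  set x₂ := step x₁ (p, 2)
  have hx₂ : ∀ i, i ≠ p → x₂ i = if i ∈ I₁ then 1 else patientZero M i := fun i hi =>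
    (step_of_ne hi).trans (applyWord_map_pair _ _ _ _)
  have hv₁ : IsValid A (patientZero M) (I₁.map (·, 1)) :=
    isValid_map_infect hA (hI.sublist (List.sublist_append_left _ _))
      (fun m hm => patientZero_of_ne_zero ((hmemI m).mp (List.mem_append_left _ hm))) ⟨0, rfl⟩
  have hp₁ : IsStep A x₁ (p, 2) := by
    refine Or.inr ⟨rfl, ?_⟩
    rcases List.mem_cons.mp hp with rfl | hp
    · simp [x₁, applyWord_map_pair, h0I₁]
    · simp [x₁, applyWord_map_pair, hp]
  -- two nodes, patient zero and the first infected, are infected before `p` recovers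
  have hinf₂ : ∃ j, x₂ j = 1 := by
    obtain ⟨a, ha⟩ := List.exists_mem_of_ne_nil _ hI₁
    by_cases hap : a = p
    · refine ⟨0, ?_⟩
      rw [hx₂ 0 (hap ▸ ne_of_mem_of_not_mem ha h0I₁).symm, if_neg h0I₁]
      rfl
    · exact ⟨a, by rw [hx₂ a hap, if_pos ha]⟩
  have hv₂ : IsValid A x₂ (I₂.map (·, 1)) := by
    refine isValid_map_infect hA (hI.sublist (List.sublist_append_right _ _))
      (fun m hm => ?_) hinf₂
    rw [hx₂ m (ne_of_mem_of_not_mem hm hpI₂), if_neg (fun h => hdisj h hm),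
      patientZero_of_ne_zero ((hmemI m).mp (List.mem_append_right _ hm))]
  refine ⟨isValid_append.mpr ⟨hv₁, hp₁, hv₂⟩, funext fun i => ?_⟩
  rw [applyWord_append, applyWord_cons, applyWord_map_pair]
  change (if i ∈ I₂ then 1 else x₂ i) = if i = p then 2 else 1
  rcases eq_or_ne i p with rfl | hip
  · rw [if_neg hpI₂, if_pos rfl]
    exact step_self
  · rw [hx₂ i hip, if_neg hip]
    by_cases hi₂ : i ∈ I₂
    · rw [if_pos hi₂]
    by_cases hi₁ : i ∈ I₁
    · rw [if_neg hi₂, if_pos hi₁]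
    obtain rfl : i = 0 := by simpa [hi₁, hi₂] using hmemI i
    simp [hi₁, hi₂]

lemma isEpidemic_splitWord (hA : ∀ j m, j ≠ m → A j m) {I₁ I₂ R : List (Fin (M + 1))}
    {p : Fin (M + 1)} (hI : (I₁ ++ I₂).Nodup) (hmemI : ∀ m, m ∈ I₁ ++ I₂ ↔ m ≠ 0)
    (hI₁ : I₁ ≠ []) (hp : p ∈ 0 :: I₁) (hR : R.Nodup)
    (hmemR : ∀ m, m ∈ R ↔ m ≠ p) :
    IsEpidemic A (splitWord I₁ p I₂ R) := by
  obtain ⟨hvalid, hstate⟩ := isValid_infect_recover_infect hA hI hmemI hI₁ hp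
  have hword : splitWord I₁ p I₂ R =
      (I₁.map (·, 1) ++ (p, 2) :: I₂.map (·, 1)) ++ R.map (·, 2) := by
    simp [splitWord]
  rw [hword]
  refine ⟨isValid_append.mpr ⟨hvalid, isValid_map_recover hR fun m hm => ?_⟩,
    funext fun i => ?_⟩
  · rw [hstate]
    exact if_neg ((hmemR m).mp hm)
  · rw [applyWord_append, hstate, applyWord_map_pair]
    by_cases hi : i = p
    · simp [hi, hmemR]
    · simp [(hmemR i).mpr hi]

open Equiv (Perm)

def infectionOrder (σ : Perm (Fin M)) : List (Fin (M + 1)) := List.ofFn fun i => (σ i).succ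

lemma nodup_zero_cons_infectionOrder (σ : Perm (Fin M)) : (0 :: infectionOrder σ).Nodup := by
  simp [infectionOrder, List.nodup_ofFn, Fin.succ_ne_zero]
  exact fun a b h => σ.injective (Fin.succ_injective _ h)

lemma mem_infectionOrder {σ : Perm (Fin M)} {m : Fin (M + 1)} :
    m ∈ infectionOrder σ ↔ m ≠ 0 := by
  refine ⟨fun hm => ?_, fun hm => ?_⟩
  · exact ne_of_mem_of_not_mem hm (List.nodup_cons.mp (nodup_zero_cons_infectionOrder σ)).1
  · obtain ⟨i, rfl⟩ := Fin.exists_succ_eq.mpr hm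
    exact List.mem_ofFn.mpr ⟨σ.symm i, by simp⟩

lemma infectionOrder_injective : Function.Injective (infectionOrder (M := M)) := fun _ _ h =>
  Equiv.ext fun i => Fin.succ_injective _ (congrFun (List.ofFn_injective h) i)

def firstRecovered (σ : Perm (Fin M)) (c : Fin M) (j : Fin (c + 2)) : Fin (M + 1) :=
  (0 :: infectionOrder σ)[(j : ℕ)]'(by simp [infectionOrder]; omega)

lemma firstRecovered_mem (σ : Perm (Fin M)) (c : Fin M) (j : Fin (c + 2)) :
    firstRecovered σ c j ∈ 0 :: (infectionOrder σ).take (c + 1) := by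
  rw [← List.take_succ_cons, firstRecovered, ← List.getElem_take (j := c + 2)]
  · exact List.getElem_mem _
  · simp [infectionOrder]; omega

def lowerWord (σ τ : Perm (Fin M)) (c : Fin M) (j : Fin (c + 2)) : List (Event (M + 1)) :=
  splitWord ((infectionOrder σ).take (c + 1)) (firstRecovered σ c j)
    ((infectionOrder σ).drop (c + 1)) (List.ofFn fun i => (firstRecovered σ c j).succAbove (τ i))

lemma isEpidemic_lowerWord (hA : ∀ j m, j ≠ m → A j m)
    (σ τ : Perm (Fin M)) (c : Fin M) (j : Fin (c + 2)) : IsEpidemic A (lowerWord σ τ c j) := by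
  refine isEpidemic_splitWord hA ?_ (fun m => ?_) ?_ (firstRecovered_mem σ c j) ?_ (fun m => ?_)
  · rw [List.take_append_drop]
    exact (List.nodup_cons.mp (nodup_zero_cons_infectionOrder σ)).2
  · rw [List.take_append_drop, mem_infectionOrder]
  · simpa [infectionOrder] using c.pos.ne'
  · exact List.nodup_ofFn.mpr (Fin.succAbove_right_injective.comp τ.injective)
  · refine ⟨fun hm => ?_, fun hm => ?_⟩
    · obtain ⟨i, rfl⟩ := List.mem_ofFn.mp hm
      exact Fin.succAbove_ne _ _
    · obtain ⟨i, rfl⟩ := Fin.exists_succAbove_eq hm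
      exact List.mem_ofFn.mpr ⟨τ.symm i, by simp⟩

lemma lowerWord_injective :
    Function.Injective fun q : Perm (Fin M) × Perm (Fin M) × (Σ c : Fin M, Fin (c + 2)) =>
      lowerWord q.1 q.2.1 q.2.2.1 q.2.2.2 := by
  rintro ⟨σ, τ, c, j⟩ ⟨σ', τ', c', j'⟩ h
  obtain ⟨htake, hp, hdrop, hR⟩ := splitWord_inj h
  obtain rfl : σ = σ' := infectionOrder_injective <| by
    rw [← List.take_append_drop (c + 1) (infectionOrder σ), htake, hdrop, List.take_append_drop]
  obtain rfl : c = c' := Fin.ext <| by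
    simpa [infectionOrder, Nat.min_eq_left (Nat.succ_le_of_lt c.isLt),
      Nat.min_eq_left (Nat.succ_le_of_lt c'.isLt)] using congrArg List.length htake
  obtain rfl : j = j' := Fin.ext <|
    ((nodup_zero_cons_infectionOrder σ).getElem_inj_iff).mp hp
  obtain rfl : τ = τ' := Equiv.ext fun i =>
    Fin.succAbove_right_injective (hp ▸ congrFun (List.ofFn_injective hR) i)
  rfl

theorem le_card_epidemics (hA : ∀ j m, j ≠ m → A j m) :
    M.factorial * (M.factorial * ∑ c : Fin M, ((c : ℕ) + 2)) ≤ (epidemics A).card := by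
  have := Finset.card_le_card_of_injOn (s := Finset.univ) (t := epidemics A) _
    (fun q _ => mem_epidemics.mpr (isEpidemic_lowerWord hA q.1 q.2.1 q.2.2.1 q.2.2.2))
    lowerWord_injective.injOn
  rw [Finset.card_univ, Fintype.card_prod, Fintype.card_prod, Fintype.card_perm,
    Fintype.card_sigma] at this
  simpa using this

lemma two_mul_add_one_le_sum (hM : 2 ≤ M) : 2 * M + 1 ≤ ∑ c : Fin M, ((c : ℕ) + 2) := by
  rw [Fin.sum_univ_eq_sum_range (· + 2), Finset.sum_add_distrib, Finset.sum_const,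
    Finset.card_range, smul_eq_mul]
  have hgauss := Finset.sum_range_id_mul_two M
  obtain ⟨k, rfl⟩ := Nat.exists_eq_add_of_le hM
  rw [show 2 + k - 1 = k + 1 by omega] at hgauss
  nlinarith

theorem two_mul_add_one_mul_sq_factorial_le_card_epidemics (hA : ∀ j m, j ≠ m → A j m)
    (hM : 2 ≤ M) : (2 * M + 1) * M.factorial ^ 2 ≤ (epidemics A).card :=
  calc (2 * M + 1) * M.factorial ^ 2
      ≤ M.factorial * (M.factorial * ∑ c : Fin M, ((c : ℕ) + 2)) := by
        rw [sq, mul_comm, mul_assoc]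
        exact Nat.mul_le_mul_left _ (Nat.mul_le_mul_left _ (two_mul_add_one_le_sum hM))
    _ ≤ (epidemics A).card := le_card_epidemics hA

end SIR

/-- For the complete graph on `N ≥ 3` nodes, the number `P` of SIR
paths from the configuration with node 0 infected and all others susceptible to
the all-recovered configuration satisfies
`(N−1)!·N! < (2N−1)·((N−1)!)² ≤ P` and `2^(N−1)·P < (2N−1)!`. -/
theorem stmt0 (N : ℕ) (hN : 3 ≤ N)
    (A : Fin N → Fin N → Prop) (hA : ∀ j m : Fin N, A j m ↔ j ≠ m)
    (P : ℕ)
    (hP : P = numSIRPaths A (fun k => if (k : ℕ) = 0 then 1 else 0) (fun _ => 2)) :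
    Nat.factorial (N - 1) * Nat.factorial N < (2 * N - 1) * (Nat.factorial (N - 1)) ^ 2 ∧
    (2 * N - 1) * (Nat.factorial (N - 1)) ^ 2 ≤ P ∧
    2 ^ (N - 1) * P < Nat.factorial (2 * N - 1) := by
  obtain ⟨M, rfl⟩ : ∃ M, N = M + 1 := ⟨N - 1, by omega⟩
  have hP : P = (SIR.epidemics A).card := hP.trans SIR.numSIRPaths_patientZero_eq_card
  rw [Nat.add_sub_cancel, show 2 * (M + 1) - 1 = 2 * M + 1 by omega, hP]
  have hfact := M.factorial_pos
  refine ⟨?_, ?_, ?_⟩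
  · rw [Nat.factorial_succ]
    nlinarith
  · exact SIR.two_mul_add_one_mul_sq_factorial_le_card_epidemics (fun j m => (hA j m).mpr)
      (by omega)
  · exact SIR.two_pow_mul_card_epidemics_lt (by omega)
end

section
/- Let N ≥ 1. For the complete graph on N nodes (adjacency A j m holds iff j ≠ m), the number of SIR paths from the configuration in which node 0 is infected and all other nodes are susceptible to the all-infected configuration equals exactly (N−1)!. -/
theorem List.ncard_setOf_perm {α : Type*} [DecidableEq α] (t : Finset α) :
    {l : List α | l.Perm t.toList}.ncard = t.card.factorial := by
  have hperm : {l : List α | l.Perm t.toList} = ↑t.toList.permutations.toFinset := by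
    ext l
    simp [List.mem_permutations]
  rw [hperm, Set.ncard_coe_finset,
    List.toFinset_card_of_nodup (List.nodup_permutations _ t.nodup_toList),
    List.length_permutations, Finset.length_toList]

section

variable {N : ℕ} {A : Fin N → Fin N → Prop} {x y z w : Fin N → Fin 3}
  {L : List (Fin N → Fin 3)}

theorem isSIRPath_iff : IsSIRPath A x y L ↔
    L ≠ [] ∧ L.head? = some x ∧ L.getLast? = some y ∧ L.IsChain (SIRTrans A) :=
  Iff.rfl

theorem isSIRPath_singleton : IsSIRPath A x y [z] ↔ z = x ∧ z = y := by
  simp [isSIRPath_iff]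

theorem isSIRPath_cons_cons :
    IsSIRPath A x y (z :: w :: L) ↔ z = x ∧ SIRTrans A z w ∧ IsSIRPath A w y (w :: L) := by
  simp only [isSIRPath_iff, List.isChain_cons_cons, List.getLast?_cons_cons,
    List.head?_cons, Option.some.injEq, ne_eq, reduceCtorEq, not_false_eq_true, true_and]
  tauto

theorem SIRTrans.apply_eq_two (h : SIRTrans A x y) {i : Fin N} (hi : x i = 2) : y i = 2 := by
  rcases h with ⟨m, hm, -, -, hy⟩ | ⟨m, hm, -, hy⟩ <;>
  · have him : i ≠ m := by rintro rfl; simp [hm] at hi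
    rw [hy i him, hi]

theorem IsSIRPath.apply_eq_two (hL : IsSIRPath A x y L) {i : Fin N} (hi : x i = 2) :
    y i = 2 := by
  induction L generalizing x with
  | nil => exact absurd rfl hL.1
  | cons z L ih =>
    cases L with
    | nil =>
      obtain ⟨rfl, rfl⟩ := isSIRPath_singleton.1 hL
      exact hi
    | cons w L =>
      obtain ⟨rfl, hzw, hw⟩ := isSIRPath_cons_cons.1 hL
      exact ih hw (hzw.apply_eq_two hi)

end

section

variable {N : ℕ} {A : Fin N → Fin N → Prop}

def infectedConfig (s : Finset (Fin N)) : Fin N → Fin 3 :=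
  fun k => if k ∈ s then 1 else 0

theorem infectedConfig_injective : Function.Injective (infectedConfig (N := N)) := by
  intro s t h
  ext k
  have hk := congrFun h k
  simp only [infectedConfig] at hk
  split_ifs at hk <;> simp_all

theorem infectedConfig_eq_one_iff {s : Finset (Fin N)} :
    infectedConfig s = (fun _ => 1) ↔ s = Finset.univ := by
  simp [funext_iff, infectedConfig, Finset.eq_univ_iff_forall]

theorem sirTrans_infectedConfig_insert {s : Finset (Fin N)} {j m : Fin N} (hj : j ∈ s)
    (hjm : A j m) (hm : m ∉ s) :
    SIRTrans A (infectedConfig s) (infectedConfig (insert m s)) := by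
  refine Or.inl ⟨m, by simp [infectedConfig, hm], by simp [infectedConfig],
    ⟨j, hjm, by simp [infectedConfig, hj]⟩, fun i him => by simp [infectedConfig, him]⟩

theorem SIRTrans.exists_eq_infectedConfig_insert {s : Finset (Fin N)} {y : Fin N → Fin 3}
    (h : SIRTrans A (infectedConfig s) y) (hy : ∀ i, y i ≠ 2) :
    ∃ m ∉ s, y = infectedConfig (insert m s) := by
  rcases h with ⟨m, hm, hym, -, hy⟩ | ⟨m, -, hym, -⟩
  · refine ⟨m, by simpa [infectedConfig] using hm, funext fun k => ?_⟩
    by_cases hkm : k = m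
    · simp [hkm, hym, infectedConfig]
    · simp [hy k hkm, infectedConfig, hkm]
  · exact absurd hym (hy m)

def IsInfectionOrder (s : Finset (Fin N)) (l : List (Fin N)) : Prop :=
  l.Nodup ∧ ∀ k, k ∈ l ↔ k ∉ s

theorem isInfectionOrder_nil {s : Finset (Fin N)} :
    IsInfectionOrder s [] ↔ s = Finset.univ := by
  simp [IsInfectionOrder, Finset.eq_univ_iff_forall]

theorem isInfectionOrder_cons {s : Finset (Fin N)} {m : Fin N} {l : List (Fin N)} :
    IsInfectionOrder s (m :: l) ↔ m ∉ s ∧ IsInfectionOrder (insert m s) l := by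
  simp only [IsInfectionOrder, List.nodup_cons, List.mem_cons, Finset.mem_insert, not_or]
  constructor
  · rintro ⟨⟨hml, hl⟩, hmem⟩
    refine ⟨(hmem m).1 (Or.inl rfl), hl, fun k => ⟨fun hk => ⟨?_, (hmem k).1 (Or.inr hk)⟩,
      fun hk => ((hmem k).2 hk.2).resolve_left hk.1⟩⟩
    rintro rfl
    exact hml hk
  · rintro ⟨hms, hl, hmem⟩
    refine ⟨⟨fun hml => ((hmem m).1 hml).1 rfl, hl⟩, fun k => ?_⟩
    by_cases hkm : k = m
    · simp [hkm, hms]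
    · simp [hkm, hmem k]

theorem isInfectionOrder_iff_perm {s : Finset (Fin N)} {l : List (Fin N)} :
    IsInfectionOrder s l ↔ l.Perm sᶜ.toList := by
  constructor
  · rintro ⟨hl, hmem⟩
    rw [List.perm_ext_iff_of_nodup hl sᶜ.nodup_toList]
    simpa using hmem
  · intro h
    exact ⟨h.nodup_iff.2 sᶜ.nodup_toList, fun k => by simp [h.mem_iff]⟩

def infectionPath : Finset (Fin N) → List (Fin N) → List (Fin N → Fin 3)
  | s, [] => [infectedConfig s]
  | s, m :: l => infectedConfig s :: infectionPath (insert m s) l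

theorem infectionPath_eq_cons (s : Finset (Fin N)) (l : List (Fin N)) :
    infectionPath s l = infectedConfig s :: (infectionPath s l).tail := by
  cases l <;> rfl

theorem isSIRPath_infectionPath (hA : ∀ j m, j ≠ m → A j m) {s : Finset (Fin N)}
    (hs : s.Nonempty) {l : List (Fin N)} (hl : IsInfectionOrder s l) :
    IsSIRPath A (infectedConfig s) (fun _ => 1) (infectionPath s l) := by
  induction l generalizing s with
  | nil =>
    rw [infectionPath, isSIRPath_singleton, infectedConfig_eq_one_iff]
    exact ⟨rfl, isInfectionOrder_nil.1 hl⟩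
  | cons m l ih =>
    obtain ⟨hm, hl⟩ := isInfectionOrder_cons.1 hl
    obtain ⟨j, hj⟩ := hs
    rw [infectionPath, infectionPath_eq_cons, isSIRPath_cons_cons, ← infectionPath_eq_cons]
    exact ⟨rfl, sirTrans_infectedConfig_insert hj (hA j m (ne_of_mem_of_not_mem hj hm)) hm,
      ih (Finset.insert_nonempty m s) hl⟩

theorem IsSIRPath.exists_infectionPath {s : Finset (Fin N)} {L : List (Fin N → Fin 3)}
    (hL : IsSIRPath A (infectedConfig s) (fun _ => 1) L) :
    ∃ l, IsInfectionOrder s l ∧ infectionPath s l = L := by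
  induction L generalizing s with
  | nil => exact absurd rfl hL.1
  | cons z L ih =>
    cases L with
    | nil =>
      obtain ⟨rfl, hs⟩ := isSIRPath_singleton.1 hL
      exact ⟨[], isInfectionOrder_nil.2 (infectedConfig_eq_one_iff.1 hs), rfl⟩
    | cons w L =>
      obtain ⟨rfl, hzw, hw⟩ := isSIRPath_cons_cons.1 hL
      -- a recovered node would still be recovered in the final, all-infected configuration
      obtain ⟨m, hm, rfl⟩ := hzw.exists_eq_infectedConfig_insert
        fun i hi => by simpa using hw.apply_eq_two hi
      obtain ⟨l, hl, hLl⟩ := ih hw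
      exact ⟨m :: l, isInfectionOrder_cons.2 ⟨hm, hl⟩, by rw [← hLl]; rfl⟩

theorem infectionPath_injOn (s : Finset (Fin N)) :
    Set.InjOn (infectionPath s) {l | IsInfectionOrder s l} := by
  intro l (hl : IsInfectionOrder s l) l' (hl' : IsInfectionOrder s l') h
  induction l generalizing s l' with
  | nil =>
    cases l' with
    | nil => rfl
    | cons m l' =>
      rw [isInfectionOrder_nil] at hl
      exact absurd (hl ▸ Finset.mem_univ m) (isInfectionOrder_cons.1 hl').1
  | cons m l ih =>
    cases l' with
    | nil =>
      rw [isInfectionOrder_nil] at hl'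
      exact absurd (hl' ▸ Finset.mem_univ m) (isInfectionOrder_cons.1 hl).1
    | cons m' l' =>
      obtain ⟨hm, hl⟩ := isInfectionOrder_cons.1 hl
      obtain ⟨hm', hl'⟩ := isInfectionOrder_cons.1 hl'
      have htail : infectionPath (insert m s) l = infectionPath (insert m' s) l' :=
        (List.cons.inj h).2
      have hmm' : m = m' := by
        rw [infectionPath_eq_cons, infectionPath_eq_cons (insert m' s)] at htail
        exact (Finset.insert_inj hm).1 (infectedConfig_injective (List.cons.inj htail).1)
      subst hmm'
      rw [ih _ hl hl' htail]

theorem numSIRPaths_infectedConfig (hA : ∀ j m, j ≠ m → A j m) {s : Finset (Fin N)}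
    (hs : s.Nonempty) :
    numSIRPaths A (infectedConfig s) (fun _ => 1) = sᶜ.card.factorial := by
  have hpaths : {L | IsSIRPath A (infectedConfig s) (fun _ => 1) L} =
      infectionPath s '' {l | IsInfectionOrder s l} :=
    Set.ext fun _ => ⟨IsSIRPath.exists_infectionPath,
      fun ⟨_, hl, hL⟩ => hL ▸ isSIRPath_infectionPath hA hs hl⟩
  have horders : {l | IsInfectionOrder s l} = {l | l.Perm sᶜ.toList} :=
    Set.ext fun _ => isInfectionOrder_iff_perm
  rw [numSIRPaths, hpaths, (infectionPath_injOn s).ncard_image, horders, List.ncard_setOf_perm]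

end

/-- for the complete graph on `N ≥ 1` nodes, the number of SIR
paths from the configuration with node 0 infected and all others susceptible to
the all-infected configuration equals `(N−1)!`. -/
theorem stmt4 (N : ℕ) (hN : 1 ≤ N) (A : Fin N → Fin N → Prop)
    (hA : ∀ j m : Fin N, A j m ↔ j ≠ m) :
    numSIRPaths A (fun k => if (k : ℕ) = 0 then 1 else 0) (fun _ => 1) =
      Nat.factorial (N - 1) := by
  have hx : (fun k : Fin N => if (k : ℕ) = 0 then (1 : Fin 3) else 0) =
      infectedConfig {⟨0, hN⟩} := by
    funext k
    simp [infectedConfig, Fin.ext_iff]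
  rw [hx, numSIRPaths_infectedConfig (fun j m => (hA j m).2) (Finset.singleton_nonempty _),
    Finset.card_compl, Finset.card_singleton, Fintype.card_fin]
end

section
/- Let N ≥ 1 and consider the complete graph on N nodes (adjacency A j m holds iff j ≠ m). For natural numbers k, l with k + l ≤ N, let P(k,l) denote the total number of SIR paths from the configuration in which node 0 is infected and all others are susceptible to configurations having exactly k infected nodes and exactly l recovered nodes (summed over all such end configurations). Then P(1,0) = 1; for every k with 2 ≤ k ≤ N, P(k,0) = (N − k + 1)·P(k−1, 0); for every l ≥ 1 with 1 + l ≤ N, P(1,l) = 2·P(2, l−1); and for all k ≥ 2, l ≥ 1 with k + l ≤ N, P(k,l) = (N − k − l + 1)·P(k−1, l) + (k+1)·P(k+1, l−1), where P(k+1, l−1) is interpreted as 0 if k + 1 + (l − 1) > N. -/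
/-- The total number of SIR paths from `x0` to configurations with exactly `k`
infected nodes and exactly `l` recovered nodes. -/
noncomputable def totalSIRPaths {N : ℕ} (A : Fin N → Fin N → Prop)
    (x0 : Fin N → Fin 3) (k l : ℕ) : ℕ :=
  ∑ y ∈ Finset.univ.filter (fun y : Fin N → Fin 3 =>
      (Finset.univ.filter fun i : Fin N => y i = 1).card = k ∧
      (Finset.univ.filter fun i : Fin N => y i = 2).card = l),
    numSIRPaths A x0 y


/-!
Every SIR transition raises the coordinate sum by one, so the paths between two configurations are
finite, and a path from `x₀` to `y ≠ x₀` is a path from `x₀` to a predecessor `z` of `y` followed by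
the step `z → y`. Summing over the end configurations with `k` infected and `l` recovered nodes and
exchanging the two sums, `P(k, l) = ∑_z paths(x₀, z) · #{successors of z with k infected and
l recovered}`. On the complete graph a configuration with `i ≥ 1` infected and `r` recovered nodes
has one infection successor per susceptible node (`N - i - r` of them, with `i + 1` infected and
`r` recovered nodes) and one recovery successor per infected node (`i` of them, with `i - 1`
infected and `r + 1` recovered nodes); for `i = 0` only the recovery successors remain.
-/

open Finset Function

theorem update_injOn {α β : Type*} [DecidableEq α] (z : α → β) (c : β) :
    Set.InjOn (update z · c) {m | z m ≠ c} := by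
  intro m₁ h₁ m₂ _ h
  by_contra hne
  have := congrFun h m₁
  simp only [update_self, update_of_ne hne] at this
  exact h₁ this.symm

section Update

variable {α β : Type*} [Fintype α] [DecidableEq α] [DecidableEq β] {z : α → β} {m : α} {b c : β}

theorem card_filter_update_self_eq (hm : z m ≠ b) :
    #{i | update z m b i = b} = #{i | z i = b} + 1 := by
  rw [← card_insert_of_notMem (s := {i | z i = b}) (by simpa using hm)]
  congr 1
  ext i
  by_cases h : i = m <;> simp [h, update_apply]

theorem card_filter_update_of_ne (hm : z m ≠ b) (hc : c ≠ b) :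
    #{i | update z m c i = b} = #{i | z i = b} := by
  congr 1
  ext i
  by_cases h : i = m <;> simp [h, update_apply, hm, hc]

theorem card_filter_update_add_one (hm : z m = b) (hc : c ≠ b) :
    #{i | update z m c i = b} + 1 = #{i | z i = b} := by
  rw [← card_erase_add_one (s := {i | z i = b}) (by simpa using hm)]
  congr 2
  ext i
  by_cases h : i = m <;> simp [h, update_apply, hc]

end Update

namespace SIR

variable {N : ℕ} {A : Fin N → Fin N → Prop}

def level (x : Fin N → Fin 3) : ℕ := ∑ i, (x i : ℕ)

theorem _root_.SIRTrans.level_eq {x y : Fin N → Fin 3} (h : SIRTrans A x y) :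
    level y = level x + 1 := by
  obtain ⟨m, hxm, hym, -, hy⟩ | ⟨m, hxm, hym, hy⟩ := h <;>
  · rw [level, level, ← sum_erase_add _ _ (mem_univ m), ← sum_erase_add _ _ (mem_univ m),
      sum_congr rfl fun i hi => by rw [hy i (ne_of_mem_erase hi)], hxm, hym]
    omega

theorem _root_.IsSIRPath.level_add_length {x y : Fin N → Fin 3} {L : List (Fin N → Fin 3)}
    (h : IsSIRPath A x y L) : level x + L.length = level y + 1 := by
  induction L generalizing x with
  | nil => exact absurd rfl h.1
  | cons a t ih =>
    obtain ⟨-, hx, hy, hc⟩ := h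
    obtain rfl : a = x := Option.some_inj.mp hx
    cases t with
    | nil => obtain rfl : a = y := Option.some_inj.mp hy; simp
    | cons b t =>
      rw [List.Chain', List.isChain_cons_cons] at hc
      have := ih ⟨List.cons_ne_nil _ _, rfl, by rwa [List.getLast?_cons_cons] at hy, hc.2⟩
      have := hc.1.level_eq
      simp only [List.length_cons] at *
      omega

theorem finite_setOf_isSIRPath (x y : Fin N → Fin 3) :
    {L | IsSIRPath A x y L}.Finite :=
  (List.finite_length_le _ (level y + 1)).subset fun L hL => by
    have := IsSIRPath.level_add_length hL
    simp only [Set.mem_ofPred_eq]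
    omega

theorem isSIRPath_of_level_le {x y : Fin N → Fin 3} {L : List (Fin N → Fin 3)}
    (hxy : level y ≤ level x) : IsSIRPath A x y L ↔ x = y ∧ L = [x] := by
  constructor
  · intro h
    have hlen := h.level_add_length
    obtain ⟨a, rfl⟩ := List.length_eq_one_iff.mp (show L.length = 1 by
      have := List.length_pos_iff.mpr h.1; omega)
    obtain ⟨-, hx, hy, -⟩ := h
    simp only [List.head?_cons, List.getLast?_singleton, Option.some_inj] at hx hy
    exact ⟨hx.symm.trans hy, by rw [hx]⟩
  · rintro ⟨rfl, rfl⟩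
    exact ⟨List.cons_ne_nil _ _, rfl, rfl, List.isChain_singleton _⟩

theorem numSIRPaths_of_level_le {x y : Fin N → Fin 3} (hxy : level y ≤ level x) :
    numSIRPaths A x y = if x = y then 1 else 0 := by
  simp only [numSIRPaths, isSIRPath_of_level_le hxy]
  split_ifs with h <;> simp [h]

theorem isSIRPath_iff_exists_append_singleton {x y : Fin N → Fin 3} (hxy : x ≠ y)
    {L : List (Fin N → Fin 3)} :
    IsSIRPath A x y L ↔ ∃ z M, SIRTrans A z y ∧ IsSIRPath A x z M ∧ L = M ++ [y] := by
  constructor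
  · rintro ⟨hne, hx, hy, hc⟩
    obtain ⟨M, b, rfl⟩ := L.eq_nil_or_concat'.resolve_left hne
    obtain rfl : b = y := by simpa using hy
    rcases M.eq_nil_or_concat' with rfl | ⟨M, z, rfl⟩
    · exact absurd (by simpa using hx) hxy.symm
    rw [List.Chain', List.isChain_append] at hc
    refine ⟨z, M ++ [z], by simpa using hc.2.2, ⟨by simp, ?_, by simp, hc.1⟩, rfl⟩
    rwa [List.head?_append_of_ne_nil _ (by simp)] at hx
  · rintro ⟨z, M, hzy, ⟨hne, hx, hz, hc⟩, rfl⟩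
    refine ⟨by simp, by rwa [List.head?_append_of_ne_nil _ hne], by simp, ?_⟩
    rw [List.Chain', List.isChain_append]
    exact ⟨hc, List.isChain_singleton _, by simpa [hz] using hzy⟩

open scoped Classical in
theorem numSIRPaths_eq_sum_pred {x y : Fin N → Fin 3} (hxy : x ≠ y) :
    numSIRPaths A x y = ∑ z ∈ univ.filter (SIRTrans A · y), numSIRPaths A x z := by
  have hfin := finite_setOf_isSIRPath (A := A) x
  have key : (hfin y).toFinset = (univ.filter (SIRTrans A · y)).biUnion
      fun z => (hfin z).toFinset.image (· ++ [y]) := by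
    ext L
    simp only [Set.Finite.mem_toFinset, Set.mem_ofPred_eq, mem_biUnion, mem_filter, mem_univ,
      true_and, mem_image, isSIRPath_iff_exists_append_singleton hxy]
    grind
  rw [numSIRPaths, Set.ncard_eq_toFinset_card _ (hfin y), key, card_biUnion]
  · refine sum_congr rfl fun z _ => ?_
    rw [card_image_of_injective _ (List.append_left_injective [y]), numSIRPaths,
      Set.ncard_eq_toFinset_card _ (hfin z)]
  · intro z₁ _ z₂ _ hz
    simp only [Function.onFun, disjoint_left, mem_image, Set.Finite.mem_toFinset,
      Set.mem_ofPred_eq]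
    rintro _ ⟨M, hM₁, rfl⟩ ⟨M', hM₂, hMM'⟩
    obtain rfl := List.append_left_injective [y] hMM'
    exact hz (Option.some_inj.mp (hM₁.2.2.1.symm.trans hM₂.2.2.1))

open scoped Classical in
theorem sum_numSIRPaths_eq_sum_mul_card {x : Fin N → Fin 3} {s : Finset (Fin N → Fin 3)}
    (hx : x ∉ s) :
    ∑ y ∈ s, numSIRPaths A x y = ∑ z, numSIRPaths A x z * #(s.filter (SIRTrans A z)) := by
  calc ∑ y ∈ s, numSIRPaths A x y
      = ∑ y ∈ s, ∑ z ∈ univ.filter (SIRTrans A · y), numSIRPaths A x z :=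
        sum_congr rfl fun y hy => numSIRPaths_eq_sum_pred fun h => hx (h ▸ hy)
    _ = ∑ z, ∑ y ∈ s.filter (SIRTrans A z), numSIRPaths A x z :=
        sum_comm' fun y z => by simp only [mem_filter, mem_univ, true_and]; tauto
    _ = _ := by simp only [sum_const, smul_eq_mul, mul_comm]


def numSusceptible (x : Fin N → Fin 3) : ℕ := #{i | x i = 0}
def numInfected (x : Fin N → Fin 3) : ℕ := #{i | x i = 1}
def numRecovered (x : Fin N → Fin 3) : ℕ := #{i | x i = 2}

theorem numSusceptible_add_numInfected_add_numRecovered (x : Fin N → Fin 3) :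
    numSusceptible x + numInfected x + numRecovered x = N := by
  have := card_eq_sum_card_fiberwise (f := x) (s := univ) (t := univ) (by simp)
  rw [card_univ, Fintype.card_fin, Fin.sum_univ_three] at this
  exact this.symm

theorem level_eq_numInfected_add (x : Fin N → Fin 3) :
    level x = numInfected x + 2 * numRecovered x := by
  simp only [level, numInfected, numRecovered, card_filter, mul_sum, ← sum_add_distrib]
  refine sum_congr rfl fun i _ => ?_
  generalize x i = v
  fin_cases v <;> rfl

theorem totalSIRPaths_eq_sum (x : Fin N → Fin 3) (k l : ℕ) :
    totalSIRPaths A x k l =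
      ∑ y ∈ univ.filter (fun y => numInfected y = k ∧ numRecovered y = l), numSIRPaths A x y :=
  rfl

theorem totalSIRPaths_self (x : Fin N → Fin 3) :
    totalSIRPaths A x (numInfected x) (numRecovered x) = 1 := by
  rw [totalSIRPaths_eq_sum, sum_congr rfl fun y hy => numSIRPaths_of_level_le (A := A) ?_,
    sum_ite_eq]
  · simp
  · simp only [mem_filter] at hy
    rw [level_eq_numInfected_add, level_eq_numInfected_add, hy.2.1, hy.2.2]

theorem mul_totalSIRPaths_eq_sum (x : Fin N → Fin 3) (c k l : ℕ) :
    c * totalSIRPaths A x k l = ∑ z, numSIRPaths A x z *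
      if numInfected z = k ∧ numRecovered z = l then c else 0 := by
  rw [totalSIRPaths_eq_sum, mul_sum, sum_filter]
  refine sum_congr rfl fun z _ => ?_
  split_ifs <;> simp [mul_comm]

section

variable {z : Fin N → Fin 3} {m : Fin N}

theorem numInfected_update_of_eq_zero (hm : z m = 0) :
    numInfected (update z m 1) = numInfected z + 1 :=
  card_filter_update_self_eq (by simp [hm])

theorem numRecovered_update_of_eq_zero (hm : z m = 0) :
    numRecovered (update z m 1) = numRecovered z :=
  card_filter_update_of_ne (by simp [hm]) (by decide)

theorem numInfected_update_of_eq_one (hm : z m = 1) :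
    numInfected (update z m 2) + 1 = numInfected z :=
  card_filter_update_add_one hm (by decide)

theorem numRecovered_update_of_eq_one (hm : z m = 1) :
    numRecovered (update z m 2) = numRecovered z + 1 :=
  card_filter_update_self_eq (by simp [hm])

end

theorem sirTrans_iff_of_complete (hA : ∀ j m : Fin N, A j m ↔ j ≠ m) {z y : Fin N → Fin 3} :
    SIRTrans A z y ↔ (numInfected z ≠ 0 ∧ ∃ m, z m = 0 ∧ update z m 1 = y) ∨
      ∃ m, z m = 1 ∧ update z m 2 = y := by
  have hinf : numInfected z ≠ 0 ↔ ∃ j, z j = 1 := by simp [numInfected]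
  simp only [SIRTrans, hinf, hA, update_eq_iff]
  constructor
  · rintro (⟨m, hm, hy, ⟨j, -, hj⟩, hrest⟩ | ⟨m, hm, hy, hrest⟩)
    · exact Or.inl ⟨⟨j, hj⟩, m, hm, hy.symm, fun i hi => (hrest i hi).symm⟩
    · exact Or.inr ⟨m, hm, hy.symm, fun i hi => (hrest i hi).symm⟩
  · rintro (⟨⟨j, hj⟩, m, hm, hy, hrest⟩ | ⟨m, hm, hy, hrest⟩)
    · exact Or.inl ⟨m, hm, hy.symm, ⟨j, fun h => by subst h; simp [hm] at hj, hj⟩,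
        fun i hi => (hrest i hi).symm⟩
    · exact Or.inr ⟨m, hm, hy.symm, fun i hi => (hrest i hi).symm⟩

open scoped Classical in
theorem filter_sirTrans_of_complete (hA : ∀ j m : Fin N, A j m ↔ j ≠ m)
    (z : Fin N → Fin 3) (k l : ℕ) :
    (univ.filter fun y => numInfected y = k ∧ numRecovered y = l).filter (SIRTrans A z) =
      ({m | z m = 0 ∧ (numInfected z ≠ 0 ∧ numInfected z + 1 = k ∧ numRecovered z = l)} :
        Finset _).image (update z · 1) ∪
      ({m | z m = 1 ∧ (numInfected z = k + 1 ∧ numRecovered z + 1 = l)} :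
        Finset _).image (update z · 2) := by
  ext y
  simp only [mem_filter, mem_univ, true_and, mem_union, mem_image, sirTrans_iff_of_complete hA]
  constructor
  · rintro ⟨⟨rfl, rfl⟩, ⟨hz, m, hm, rfl⟩ | ⟨m, hm, rfl⟩⟩
    · exact Or.inl ⟨m, ⟨hm, hz, (numInfected_update_of_eq_zero hm).symm,
        (numRecovered_update_of_eq_zero hm).symm⟩, rfl⟩
    · exact Or.inr ⟨m, ⟨hm, (numInfected_update_of_eq_one hm).symm,
        (numRecovered_update_of_eq_one hm).symm⟩, rfl⟩
  · rintro (⟨m, ⟨hm, hz, hk, hl⟩, rfl⟩ | ⟨m, ⟨hm, hk, hl⟩, rfl⟩)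
    · exact ⟨⟨by rw [numInfected_update_of_eq_zero hm, hk],
        by rw [numRecovered_update_of_eq_zero hm, hl]⟩, Or.inl ⟨hz, m, hm, rfl⟩⟩
    · have := numInfected_update_of_eq_one hm
      exact ⟨⟨by omega, by rw [numRecovered_update_of_eq_one hm, hl]⟩, Or.inr ⟨m, hm, rfl⟩⟩

open scoped Classical in
theorem card_filter_sirTrans_of_complete (hA : ∀ j m : Fin N, A j m ↔ j ≠ m)
    (z : Fin N → Fin 3) (k l : ℕ) :
    #((univ.filter fun y => numInfected y = k ∧ numRecovered y = l).filter (SIRTrans A z)) =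
      (if numInfected z ≠ 0 ∧ numInfected z + 1 = k ∧ numRecovered z = l
        then numSusceptible z else 0) +
      (if numInfected z = k + 1 ∧ numRecovered z + 1 = l then numInfected z else 0) := by
  have hdisj (p q : Prop) [Decidable p] [Decidable q] :
      Disjoint (({m | z m = 0 ∧ p} : Finset _).image (update z · 1))
        (({m | z m = 1 ∧ q} : Finset _).image (update z · 2)) := by
    simp only [disjoint_left, mem_image, mem_filter, mem_univ, true_and, not_exists, not_and]
    rintro _ ⟨m, ⟨hm, -⟩, rfl⟩ m' ⟨hm', -⟩ h
    have := congrFun h m'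
    by_cases hmm' : m' = m <;> simp_all
  have hcard (c : Fin 3) (p : Prop) [Decidable p] :
      #{m | z m = c ∧ p} = if p then #{m | z m = c} else 0 := by
    split_ifs with hp <;> simp [hp]
  rw [filter_sirTrans_of_complete hA, card_union_of_disjoint (hdisj _ _),
    card_image_of_injOn ((update_injOn z 1).mono fun m hm => by simp_all),
    card_image_of_injOn ((update_injOn z 2).mono fun m hm => by simp_all), hcard, hcard]
  rfl

/-- Without `k + l ≤ N` the truncated coefficient `N - k - l + 1` would be `1` at `k + l = N + 1`,
where the correct value is `0`. -/
theorem totalSIRPaths_of_complete (hA : ∀ j m : Fin N, A j m ↔ j ≠ m) {x : Fin N → Fin 3}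
    {k l : ℕ} (hkl : k + l ≤ N) (hx : ¬(numInfected x = k ∧ numRecovered x = l)) :
    totalSIRPaths A x k l =
      (if 2 ≤ k then N - k - l + 1 else 0) * totalSIRPaths A x (k - 1) l +
      (if 1 ≤ l then k + 1 else 0) * totalSIRPaths A x (k + 1) (l - 1) := by
  classical
  rw [mul_totalSIRPaths_eq_sum, mul_totalSIRPaths_eq_sum, ← sum_add_distrib, totalSIRPaths_eq_sum,
    sum_numSIRPaths_eq_sum_mul_card (by simpa using hx)]
  refine sum_congr rfl fun z _ => ?_
  rw [← mul_add, card_filter_sirTrans_of_complete hA]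
  have := numSusceptible_add_numInfected_add_numRecovered z
  congr 1
  split_ifs <;> omega

end SIR

/-- the recursion for the number of SIR paths on the complete
graph, starting from node 0 infected and all other nodes susceptible. -/
theorem stmt8 (N : ℕ) (hN : 1 ≤ N)
    (A : Fin N → Fin N → Prop) (hA : ∀ j m : Fin N, A j m ↔ j ≠ m)
    (P : ℕ → ℕ → ℕ)
    (hP : ∀ k l : ℕ,
      P k l = totalSIRPaths A (fun i => if (i : ℕ) = 0 then 1 else 0) k l) :
    P 1 0 = 1 ∧
    (∀ k : ℕ, 2 ≤ k → k ≤ N → P k 0 = (N - k + 1) * P (k - 1) 0) ∧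
    (∀ l : ℕ, 1 ≤ l → 1 + l ≤ N → P 1 l = 2 * P 2 (l - 1)) ∧
    (∀ k l : ℕ, 2 ≤ k → 1 ≤ l → k + l ≤ N →
      P k l = (N - k - l + 1) * P (k - 1) l + (k + 1) * P (k + 1) (l - 1)) := by
  set x₀ : Fin N → Fin 3 := fun i => if (i : ℕ) = 0 then 1 else 0
  have hI : SIR.numInfected x₀ = 1 := card_eq_one.mpr ⟨⟨0, hN⟩, by ext i; simp [x₀, Fin.ext_iff]⟩
  have hR : SIR.numRecovered x₀ = 0 := card_eq_zero.mpr <| filter_eq_empty_iff.mpr fun i _ => by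
    simp only [x₀]
    split_ifs <;> decide
  have hrec (k l : ℕ) (hkl : k + l ≤ N) (hne : ¬(k = 1 ∧ l = 0)) :
      P k l = (if 2 ≤ k then N - k - l + 1 else 0) * P (k - 1) l +
        (if 1 ≤ l then k + 1 else 0) * P (k + 1) (l - 1) := by
    simp only [hP]
    exact SIR.totalSIRPaths_of_complete hA hkl (by rwa [hI, hR, eq_comm, eq_comm (a := 0)])
  refine ⟨?_, fun k hk hkN => ?_, fun l hl hlN => ?_, fun k l hk hl hkl => ?_⟩
  · have := SIR.totalSIRPaths_self (A := A) x₀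
    rwa [hI, hR, ← hP] at this
  · rw [hrec k 0 (by omega) (by omega)]
    simp [hk]
  · rw [hrec 1 l hlN (by omega)]
    simp [hl]
  · rw [hrec k l hkl (by omega)]
    simp [hk, hl]
end

section
/- Let N ≥ 1 and let b : Fin N → Fin N → ℝ be arbitrary weighted infection rates. Define the SI infinitesimal generator Q as the real matrix indexed by finite subsets S of Fin N with entries: Q S T = ∑_{k ∈ S} b k m if T = S ∪ {m} for some m ∉ S; Q S S = −∑_{m ∉ S} ∑_{k ∈ S} b k m; and Q S T = 0 otherwise. Then the characteristic polynomial of Q equals ∏_{S ⊆ Fin N} (X + cut(S)), where cut(S) = ∑_{k ∈ S} ∑_{l ∉ S} b k l. In particular, the eigenvalues of Q counted with algebraic multiplicity are exactly the numbers −cut(S) over all subsets S of Fin N. -/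
/-- The infinitesimal generator of the Markovian SI process with weighted
infection rates `b`, indexed by the set of infected nodes: the entry `Q S T`
equals `∑_{k ∈ S} b k m` if `T = S ∪ {m}` for some `m ∉ S` (equivalently,
`S ⊆ T` and `T \ S` is a singleton `{m}`), the diagonal entry is
`−∑_{m ∉ S} ∑_{k ∈ S} b k m`, and all other entries are `0`. -/
noncomputable def SIgen (N : ℕ) (b : Fin N → Fin N → ℝ) :
    Matrix (Finset (Fin N)) (Finset (Fin N)) ℝ := fun S T =>
  if T = S then -∑ m ∈ Sᶜ, ∑ k ∈ S, b k m
  else if S ⊆ T ∧ (T \ S).card = 1 then ∑ m ∈ T \ S, ∑ k ∈ S, b k m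
  else 0

/-- The weight of the S–I cut set of the configuration with infected set `S`. -/
noncomputable def SIcut (N : ℕ) (b : Fin N → Fin N → ℝ) (S : Finset (Fin N)) : ℝ :=
  ∑ k ∈ S, ∑ l ∈ Sᶜ, b k l

/-! Infection only ever enlarges the infected set, so the generator is upper triangular for any
linear order refining inclusion (colex, say), and its eigenvalues are its diagonal entries
`-cut(S)`. -/

open Polynomial Finset

theorem Matrix.BlockTriangular.charpoly_of_injective {n α R : Type*} [Fintype n] [DecidableEq n]
    [LinearOrder α] [CommRing R] {M : Matrix n n R} {b : n → α} (hM : M.BlockTriangular b)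
    (hb : Function.Injective b) : M.charpoly = ∏ i, (X - C (M i i)) :=
  letI : LinearOrder n := LinearOrder.lift' b hb
  M.charpoly_of_isUpperTriangular hM

theorem SIgen_eq_zero_of_not_subset {N : ℕ} (b : Fin N → Fin N → ℝ) {S T : Finset (Fin N)}
    (hST : ¬ S ⊆ T) : SIgen N b S T = 0 := by
  have hTS : T ≠ S := by rintro rfl; exact hST subset_rfl
  simp [SIgen, hTS, hST]

theorem SIgen_apply_self {N : ℕ} (b : Fin N → Fin N → ℝ) (S : Finset (Fin N)) :
    SIgen N b S S = -SIcut N b S := by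
  rw [SIgen, if_pos rfl, SIcut, sum_comm]

theorem SIgen_blockTriangular_toColex (N : ℕ) (b : Fin N → Fin N → ℝ) :
    (SIgen N b).BlockTriangular toColex := fun _ _ hlt =>
  SIgen_eq_zero_of_not_subset b fun hsub => (Colex.toColex_le_toColex_of_subset hsub).not_gt hlt

theorem stmt9_general (N : ℕ) (b : Fin N → Fin N → ℝ) :
    (SIgen N b).charpoly =
      ∏ S : Finset (Fin N), (Polynomial.X + Polynomial.C (SIcut N b S)) := by
  rw [(SIgen_blockTriangular_toColex N b).charpoly_of_injective toColex.injective]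
  simp only [SIgen_apply_self, C_neg, sub_neg_eq_add]

/-- the characteristic polynomial of the SI infinitesimal
generator equals `∏_{S ⊆ Fin N} (X + cut(S))`; in particular its eigenvalues,
with algebraic multiplicity, are the numbers `−cut(S)`. -/
theorem stmt9 (N : ℕ) (hN : 1 ≤ N) (b : Fin N → Fin N → ℝ) :
    (SIgen N b).charpoly =
      ∏ S : Finset (Fin N), (Polynomial.X + Polynomial.C (SIcut N b S)) :=
  stmt9_general N b
end

section
/- Let β, δ₁, δ₂ be positive reals with β ≠ δ₂ and β + δ₁ ≠ δ₂. Define the functions s₁, s₂, s₄, s₅, s₇, s₈ : ℝ → ℝ by s₁(t) = exp(−(β+δ₁)t); s₂(t) = (δ₁/(β+δ₁))·(1 − exp(−(β+δ₁)t)); s₄(t) = (β/(β−δ₂))·(exp(−(δ₁+δ₂)t) − exp(−(β+δ₁)t)); s₅(t) = (β/(β+δ₁−δ₂))·exp(−δ₂t) + (β/(δ₂−β))·exp(−(δ₁+δ₂)t) + (β·δ₁/((β−δ₂)(β+δ₁−δ₂)))·exp(−(β+δ₁)t); s₇(t) = exp(−δ₁t) + (β/(δ₂−β))·exp(−(δ₁+δ₂)t)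 + (δ₂/(β−δ₂))·exp(−(β+δ₁)t); s₈(t) = β/(β+δ₁) − exp(−δ₁t) − (β/(β+δ₁−δ₂))·exp(−δ₂t) + (β/(β−δ₂))·exp(−(δ₁+δ₂)t) + (δ₁/(β+δ₁) − δ₂/(β−δ₂) + (δ₂−δ₁)/(β+δ₁−δ₂))·exp(−(β+δ₁)t). Then s₁(0)=1 and s₂(0)=s₄(0)=s₅(0)=s₇(0)=s₈(0)=0, and for every real t the derivatives satisfy s₁' = −(β+δ₁)·s₁, s₂' = δ₁·s₁, s₄' = β·s₁ − (δ₁+δ₂)·s₄, s₅' = δ₁·s₄ − δ₂·s₅, s₇' = δ₂·s₄ − δ₁·s₇, and s₈' = δ₂·s₅ + δ₁·s₇. -/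
/-- Probability of the state (node 1 infected, node 2 susceptible). -/
noncomputable def sir1 (β δ₁ : ℝ) (t : ℝ) : ℝ := Real.exp (-(β + δ₁) * t)

/-- Probability of the state (node 1 recovered, node 2 susceptible). -/
noncomputable def sir2 (β δ₁ : ℝ) (t : ℝ) : ℝ :=
  (δ₁ / (β + δ₁)) * (1 - Real.exp (-(β + δ₁) * t))

/-- Probability of the state (both nodes infected). -/
noncomputable def sir4 (β δ₁ δ₂ : ℝ) (t : ℝ) : ℝ :=
  (β / (β - δ₂)) * (Real.exp (-(δ₁ + δ₂) * t) - Real.exp (-(β + δ₁) * t))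

/-- Probability of the state (node 1 recovered, node 2 infected). -/
noncomputable def sir5 (β δ₁ δ₂ : ℝ) (t : ℝ) : ℝ :=
  (β / (β + δ₁ - δ₂)) * Real.exp (-δ₂ * t) +
    (β / (δ₂ - β)) * Real.exp (-(δ₁ + δ₂) * t) +
    (β * δ₁ / ((β - δ₂) * (β + δ₁ - δ₂))) * Real.exp (-(β + δ₁) * t)

/-- Probability of the state (node 1 infected, node 2 recovered). -/
noncomputable def sir7 (β δ₁ δ₂ : ℝ) (t : ℝ) : ℝ :=
  Real.exp (-δ₁ * t) + (β / (δ₂ - β)) * Real.exp (-(δ₁ + δ₂) * t) +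
    (δ₂ / (β - δ₂)) * Real.exp (-(β + δ₁) * t)

/-- Probability of the state (both nodes recovered). -/
noncomputable def sir8 (β δ₁ δ₂ : ℝ) (t : ℝ) : ℝ :=
  β / (β + δ₁) - Real.exp (-δ₁ * t) -
    (β / (β + δ₁ - δ₂)) * Real.exp (-δ₂ * t) +
    (β / (β - δ₂)) * Real.exp (-(δ₁ + δ₂) * t) +
    (δ₁ / (β + δ₁) - δ₂ / (β - δ₂) + (δ₂ - δ₁) / (β + δ₁ - δ₂)) *
      Real.exp (-(β + δ₁) * t)

/-! Each `sirᵢ` is a linear combination of exponentials `t ↦ exp (c * t)`, so it is differentiated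
termwise; each equation of the system then reduces to an identity between rational functions of
`β, δ₁, δ₂`, which holds as soon as the denominators `β + δ₁`, `β - δ₂`, `β + δ₁ - δ₂` are
nonzero. -/

open Real

lemma hasDerivAt_exp_mul (c t : ℝ) : HasDerivAt (fun s => exp (c * s)) (c * exp (c * t)) t :=
  ((hasDerivAt_id t).const_mul c).exp.congr_deriv (by simp only [id]; ring)

section TwoNodeSIR

variable {β δ₁ δ₂ : ℝ}

lemma sir1_zero : sir1 β δ₁ 0 = 1 := by simp [sir1]

lemma sir2_zero : sir2 β δ₁ 0 = 0 := by simp [sir2]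

lemma sir4_zero : sir4 β δ₁ δ₂ 0 = 0 := by simp [sir4]

lemma sir5_zero (h : β ≠ δ₂) (h' : β + δ₁ ≠ δ₂) : sir5 β δ₁ δ₂ 0 = 0 := by
  simp only [sir5, mul_zero, Real.exp_zero, mul_one]
  field_simp
  ring

lemma sir7_zero (h : β ≠ δ₂) : sir7 β δ₁ δ₂ 0 = 0 := by
  simp only [sir7, mul_zero, Real.exp_zero, mul_one]
  field_simp
  ring

lemma sir8_zero (h₀ : β + δ₁ ≠ 0) (h : β ≠ δ₂) (h' : β + δ₁ ≠ δ₂) : sir8 β δ₁ δ₂ 0 = 0 := by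
  simp only [sir8, mul_zero, Real.exp_zero, mul_one]
  field_simp
  ring

lemma hasDerivAt_sir1 (t : ℝ) : HasDerivAt (sir1 β δ₁) (-(β + δ₁) * sir1 β δ₁ t) t :=
  hasDerivAt_exp_mul _ t

lemma hasDerivAt_sir2 (h₀ : β + δ₁ ≠ 0) (t : ℝ) :
    HasDerivAt (sir2 β δ₁) (δ₁ * sir1 β δ₁ t) t := by
  refine (((hasDerivAt_exp_mul _ t).const_sub 1).const_mul _).congr_deriv ?_
  simp only [sir1]
  field_simp

lemma hasDerivAt_sir4 (h : β ≠ δ₂) (t : ℝ) :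
    HasDerivAt (sir4 β δ₁ δ₂) (β * sir1 β δ₁ t - (δ₁ + δ₂) * sir4 β δ₁ δ₂ t) t := by
  refine (((hasDerivAt_exp_mul _ t).sub (hasDerivAt_exp_mul _ t)).const_mul _).congr_deriv ?_
  simp only [sir1, sir4]
  field_simp
  ring

lemma hasDerivAt_sir5 (h : β ≠ δ₂) (h' : β + δ₁ ≠ δ₂) (t : ℝ) :
    HasDerivAt (sir5 β δ₁ δ₂) (δ₁ * sir4 β δ₁ δ₂ t - δ₂ * sir5 β δ₁ δ₂ t) t := by
  refine ((((hasDerivAt_exp_mul _ t).const_mul _).add ((hasDerivAt_exp_mul _ t).const_mul _)).add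
    ((hasDerivAt_exp_mul _ t).const_mul _)).congr_deriv ?_
  simp only [sir4, sir5]
  field_simp
  ring

lemma hasDerivAt_sir7 (h : β ≠ δ₂) (t : ℝ) :
    HasDerivAt (sir7 β δ₁ δ₂) (δ₂ * sir4 β δ₁ δ₂ t - δ₁ * sir7 β δ₁ δ₂ t) t := by
  refine (((hasDerivAt_exp_mul _ t).add ((hasDerivAt_exp_mul _ t).const_mul _)).add
    ((hasDerivAt_exp_mul _ t).const_mul _)).congr_deriv ?_
  simp only [sir4, sir7]
  field_simp
  ring

lemma hasDerivAt_sir8 (h₀ : β + δ₁ ≠ 0) (h : β ≠ δ₂) (h' : β + δ₁ ≠ δ₂) (t : ℝ) :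
    HasDerivAt (sir8 β δ₁ δ₂) (δ₂ * sir5 β δ₁ δ₂ t + δ₁ * sir7 β δ₁ δ₂ t) t := by
  refine (((((hasDerivAt_exp_mul _ t).const_sub _).sub ((hasDerivAt_exp_mul _ t).const_mul _)).add
    ((hasDerivAt_exp_mul _ t).const_mul _)).add ((hasDerivAt_exp_mul _ t).const_mul _)).congr_deriv ?_
  simp only [sir5, sir7]
  field_simp
  ring

end TwoNodeSIR

theorem stmt18_general (β δ₁ δ₂ : ℝ) (hβ : 0 < β) (hδ₁ : 0 < δ₁)
    (hne1 : β ≠ δ₂) (hne2 : β + δ₁ ≠ δ₂) :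
    sir1 β δ₁ 0 = 1 ∧ sir2 β δ₁ 0 = 0 ∧ sir4 β δ₁ δ₂ 0 = 0 ∧
    sir5 β δ₁ δ₂ 0 = 0 ∧ sir7 β δ₁ δ₂ 0 = 0 ∧ sir8 β δ₁ δ₂ 0 = 0 ∧
    (∀ t : ℝ, HasDerivAt (sir1 β δ₁) (-(β + δ₁) * sir1 β δ₁ t) t) ∧
    (∀ t : ℝ, HasDerivAt (sir2 β δ₁) (δ₁ * sir1 β δ₁ t) t) ∧
    (∀ t : ℝ, HasDerivAt (sir4 β δ₁ δ₂)
      (β * sir1 β δ₁ t - (δ₁ + δ₂) * sir4 β δ₁ δ₂ t) t) ∧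
    (∀ t : ℝ, HasDerivAt (sir5 β δ₁ δ₂)
      (δ₁ * sir4 β δ₁ δ₂ t - δ₂ * sir5 β δ₁ δ₂ t) t) ∧
    (∀ t : ℝ, HasDerivAt (sir7 β δ₁ δ₂)
      (δ₂ * sir4 β δ₁ δ₂ t - δ₁ * sir7 β δ₁ δ₂ t) t) ∧
    (∀ t : ℝ, HasDerivAt (sir8 β δ₁ δ₂)
      (δ₂ * sir5 β δ₁ δ₂ t + δ₁ * sir7 β δ₁ δ₂ t) t) := by
  have hpos : β + δ₁ ≠ 0 := (add_pos hβ hδ₁).ne'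
  exact ⟨sir1_zero, sir2_zero, sir4_zero, sir5_zero hne1 hne2, sir7_zero hne1,
    sir8_zero hpos hne1 hne2, hasDerivAt_sir1, hasDerivAt_sir2 hpos, hasDerivAt_sir4 hne1,
    hasDerivAt_sir5 hne1 hne2, hasDerivAt_sir7 hne1, hasDerivAt_sir8 hpos hne1 hne2⟩

/-- the displayed functions form the exact solution of the
Kolmogorov forward equations of the Markovian SIR process on two connected
nodes, with node 1 initially infected: they satisfy the initial conditions
`s₁(0) = 1`, `s₂(0) = s₄(0) = s₅(0) = s₇(0) = s₈(0) = 0` and the linear ODE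
system `s₁' = −(β+δ₁)s₁`, `s₂' = δ₁s₁`, `s₄' = βs₁ − (δ₁+δ₂)s₄`,
`s₅' = δ₁s₄ − δ₂s₅`, `s₇' = δ₂s₄ − δ₁s₇`, `s₈' = δ₂s₅ + δ₁s₇`. -/
theorem stmt18 (β δ₁ δ₂ : ℝ) (hβ : 0 < β) (hδ₁ : 0 < δ₁) (hδ₂ : 0 < δ₂)
    (hne1 : β ≠ δ₂) (hne2 : β + δ₁ ≠ δ₂) :
    sir1 β δ₁ 0 = 1 ∧ sir2 β δ₁ 0 = 0 ∧ sir4 β δ₁ δ₂ 0 = 0 ∧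
    sir5 β δ₁ δ₂ 0 = 0 ∧ sir7 β δ₁ δ₂ 0 = 0 ∧ sir8 β δ₁ δ₂ 0 = 0 ∧
    (∀ t : ℝ, HasDerivAt (sir1 β δ₁) (-(β + δ₁) * sir1 β δ₁ t) t) ∧
    (∀ t : ℝ, HasDerivAt (sir2 β δ₁) (δ₁ * sir1 β δ₁ t) t) ∧
    (∀ t : ℝ, HasDerivAt (sir4 β δ₁ δ₂)
      (β * sir1 β δ₁ t - (δ₁ + δ₂) * sir4 β δ₁ δ₂ t) t) ∧
    (∀ t : ℝ, HasDerivAt (sir5 β δ₁ δ₂)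
      (δ₁ * sir4 β δ₁ δ₂ t - δ₂ * sir5 β δ₁ δ₂ t) t) ∧
    (∀ t : ℝ, HasDerivAt (sir7 β δ₁ δ₂)
      (δ₂ * sir4 β δ₁ δ₂ t - δ₁ * sir7 β δ₁ δ₂ t) t) ∧
    (∀ t : ℝ, HasDerivAt (sir8 β δ₁ δ₂)
      (δ₂ * sir5 β δ₁ δ₂ t + δ₁ * sir7 β δ₁ δ₂ t) t) :=
  stmt18_general β δ₁ δ₂ hβ hδ₁ hne1 hne2
end
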